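/- arXiv:2311.11833 — 2 statements merged into one kernel-verified Lean document; each statement's English description precedes it below -/
import Mathlib

section
/- Let n and m be positive integers, let A be an invertible n×n real matrix, let D be an n×n real matrix, let b ∈ ℝⁿ, and let ε be a real number with m · |ε| · ‖A⁻¹ * D‖ < 1, where ‖·‖ is the operator norm induced by the Euclidean vector norm. For each integer α with 1 ≤ α ≤ m define the averaged perturbation solution x̂_α := (1/2)((A + (α·ε) • D)⁻¹ b + (A − (α·ε) • D)⁻¹ b). Let β ∈ ℝ^m satisfy Γ_mᵀ β = e₁, where Γ_m is the m×m matrix with entries (Γ_m)_{α,j} = α^{2j} for α = 1,…,m and j = 0,…,m−1 and e₁ = (1,0,…,0)ᵀ. Then the β-weighted combination cancels all powers of ε below 2m: Σ_{α=1}^m β_α x̂_α = A⁻¹ b + Σ_{k=m}^∞ (Σ_{α=1}^m β_α α^{2k}) • ((ε • (A⁻¹ * D))^{2k} * A⁻¹) b, where the series converges absolutely. -/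
/-! Both `(A ± t D)⁻¹ = (1 ± t A⁻¹D)⁻¹ A⁻¹` are Neumann series once `m |ε| ‖A⁻¹D‖ < 1`, and
averaging them keeps exactly the even powers, so `x̂_α = ∑ₖ α^(2k) (ε A⁻¹D)^(2k) A⁻¹ b`. The
`β`-combination multiplies the `k`-th term by the moment `∑_α β_α α^(2k)`, which by `Γ_mᵀ β = e₁`
is `1` for `k = 0` and `0` for `0 < k < m`; absolute convergence of everything comes from
comparison with the geometric series in `(m |ε| ‖A⁻¹D‖)²`. -/

open Matrix
open scoped Matrix.Norms.L2Operator

/-- Matrix-vector product, with the vector living in Euclidean space (so that vector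
norms are the Euclidean ones). -/
noncomputable def mulVecE {n : ℕ} (M : Matrix (Fin n) (Fin n) ℝ)
    (v : EuclideanSpace ℝ (Fin n)) : EuclideanSpace ℝ (Fin n) :=
  (WithLp.equiv 2 (Fin n → ℝ)).symm (M.mulVec ((WithLp.equiv 2 (Fin n → ℝ)) v))

/-- The averaged perturbation solution
`x̂_α = (1/2)((A + (α ε) • D)⁻¹ b + (A - (α ε) • D)⁻¹ b)`. -/
noncomputable def xhat {n : ℕ} (A D : Matrix (Fin n) (Fin n) ℝ)
    (b : EuclideanSpace ℝ (Fin n)) (ε α : ℝ) : EuclideanSpace ℝ (Fin n) :=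
  (1 / 2 : ℝ) • (mulVecE (A + (α * ε) • D)⁻¹ b + mulVecE (A - (α * ε) • D)⁻¹ b)

section EvenNeumann

variable {R : Type*} [NormedRing R] {u : R}

theorem summable_norm_pow_two_mul (hu : ‖u‖ < 1) : Summable fun k => ‖u ^ (2 * k)‖ := by
  have hu2 : ‖u ^ 2‖ < 1 :=
    (norm_pow_le' u two_pos).trans_lt (pow_lt_one₀ (norm_nonneg u) hu two_ne_zero)
  simpa only [pow_mul] using summable_norm_geometric_of_norm_lt_one hu2

theorem hasSum_pow_two_mul [NormedAlgebra ℝ R] [HasSummableGeomSeries R] (hu : ‖u‖ < 1) :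
    HasSum (fun k => u ^ (2 * k))
      ((2⁻¹ : ℝ) • (Ring.inverse (1 + u) + Ring.inverse (1 - u))) := by
  have hplus : HasSum (fun j => (-u) ^ j) (Ring.inverse (1 + u)) := by
    simpa only [sub_neg_eq_add] using hasSum_geom_series_inverse (-u) (by rwa [norm_neg])
  have hsum := ((hplus.add (hasSum_geom_series_inverse u hu)).const_smul (2⁻¹ : ℝ))
  rw [← (mul_right_injective₀ two_ne_zero).hasSum_iff] at hsum
  · convert hsum using 2 with k
    simp only [Function.comp_apply, (even_two_mul k).neg_pow, ← two_smul ℝ (u ^ (2 * k)),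
      smul_smul]
    norm_num
  · intro j hj
    obtain ⟨k, rfl⟩ : Odd j := Nat.not_even_iff_odd.mp fun ⟨k, hk⟩ => hj ⟨k, by simp only; omega⟩
    simp [(odd_two_mul_add_one k).neg_pow]

end EvenNeumann

theorem Matrix.inv_add_smul_eq_ringInverse_mul {ι K : Type*} [Fintype ι] [DecidableEq ι]
    [CommRing K] {A : Matrix ι ι K} (hA : IsUnit A) (D : Matrix ι ι K) (t : K) :
    (A + t • D)⁻¹ = Ring.inverse (1 + t • (A⁻¹ * D)) * A⁻¹ := by
  have hfactor : A + t • D = A * (1 + t • (A⁻¹ * D)) := by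
    rw [mul_add, mul_one, mul_smul_comm, ← Matrix.mul_assoc,
      mul_nonsing_inv A ((isUnit_iff_isUnit_det A).mp hA), Matrix.one_mul]
  rw [hfactor, Matrix.mul_inv_rev, nonsing_inv_eq_ringInverse]

section mulVecE

variable {n : ℕ}

theorem mulVecE_add (M N : Matrix (Fin n) (Fin n) ℝ) (v : EuclideanSpace ℝ (Fin n)) :
    mulVecE (M + N) v = mulVecE M v + mulVecE N v := by
  simp [mulVecE, Matrix.add_mulVec]

theorem mulVecE_smul (c : ℝ) (M : Matrix (Fin n) (Fin n) ℝ) (v : EuclideanSpace ℝ (Fin n)) :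
    mulVecE (c • M) v = c • mulVecE M v := by
  simp [mulVecE, Matrix.smul_mulVec]

theorem mulVecE_mul (M N : Matrix (Fin n) (Fin n) ℝ) (v : EuclideanSpace ℝ (Fin n)) :
    mulVecE (M * N) v = mulVecE M (mulVecE N v) := by
  simp [mulVecE, ← Matrix.mulVec_mulVec]

theorem norm_mulVecE_le (M : Matrix (Fin n) (Fin n) ℝ) (v : EuclideanSpace ℝ (Fin n)) :
    ‖mulVecE M v‖ ≤ ‖M‖ * ‖v‖ :=
  M.l2_opNorm_mulVec v

noncomputable def mulVecECLM (v : EuclideanSpace ℝ (Fin n)) :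
    Matrix (Fin n) (Fin n) ℝ →L[ℝ] EuclideanSpace ℝ (Fin n) :=
  LinearMap.toContinuousLinearMap
    { toFun := fun M => mulVecE M v
      map_add' := fun M N => mulVecE_add M N v
      map_smul' := fun c M => mulVecE_smul c M v }

theorem HasSum.mulVecE {f : ℕ → Matrix (Fin n) (Fin n) ℝ} {S : Matrix (Fin n) (Fin n) ℝ}
    (hf : HasSum f S) (v : EuclideanSpace ℝ (Fin n)) :
    HasSum (fun k => mulVecE (f k) v) (mulVecE S v) :=
  (mulVecECLM v).hasSum hf

end mulVecE

section xhat

variable {n : ℕ} {A : Matrix (Fin n) (Fin n) ℝ} (D : Matrix (Fin n) (Fin n) ℝ)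
  (b : EuclideanSpace ℝ (Fin n)) (ε α : ℝ)

theorem xhat_eq_mulVecE (hA : IsUnit A) :
    xhat A D b ε α = mulVecE ((2⁻¹ : ℝ) • (Ring.inverse (1 + (α * ε) • (A⁻¹ * D))
      + Ring.inverse (1 - (α * ε) • (A⁻¹ * D)))) (mulVecE A⁻¹ b) := by
  have hminus : A - (α * ε) • D = A + (-(α * ε)) • D := by rw [neg_smul, sub_eq_add_neg]
  rw [xhat, hminus, inv_add_smul_eq_ringInverse_mul hA, inv_add_smul_eq_ringInverse_mul hA,
    neg_smul, ← sub_eq_add_neg, mulVecE_mul, mulVecE_mul, mulVecE_smul, mulVecE_add, one_div]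

theorem smul_mulVecE_pow_mul (C : Matrix (Fin n) (Fin n) ℝ) (k : ℕ) :
    α ^ (2 * k) • mulVecE ((ε • (A⁻¹ * D)) ^ (2 * k) * C) b
      = mulVecE (((α * ε) • (A⁻¹ * D)) ^ (2 * k)) (mulVecE C b) := by
  rw [mul_smul, smul_pow α, mulVecE_smul, mulVecE_mul]

variable {D ε α}

theorem hasSum_xhat (hA : IsUnit A) (hsmall : ‖(α * ε) • (A⁻¹ * D)‖ < 1) :
    HasSum (fun k => α ^ (2 * k) • mulVecE ((ε • (A⁻¹ * D)) ^ (2 * k) * A⁻¹) b)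
      (xhat A D b ε α) := by
  simp only [smul_mulVecE_pow_mul]
  rw [xhat_eq_mulVecE D b ε α hA]
  exact (hasSum_pow_two_mul hsmall).mulVecE _

theorem summable_norm_xhat_terms (hsmall : ‖(α * ε) • (A⁻¹ * D)‖ < 1) :
    Summable fun k => ‖α ^ (2 * k) • mulVecE ((ε • (A⁻¹ * D)) ^ (2 * k) * A⁻¹) b‖ := by
  simp only [smul_mulVecE_pow_mul]
  exact ((summable_norm_pow_two_mul hsmall).mul_right ‖mulVecE A⁻¹ b‖).of_nonneg_of_le
    (fun _ => norm_nonneg _) fun _ => norm_mulVecE_le _ _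

end xhat

section LinearCombination

variable {ι 𝕜 E : Type*} [Fintype ι] [NormedField 𝕜] [NormedAddCommGroup E] [NormedSpace 𝕜 E]
  {x : ι → ℕ → 𝕜} {v : ℕ → E} (β : ι → 𝕜)

theorem sum_smul_smul_eq_sum_mul_smul (k : ℕ) :
    ∑ i, β i • (x i k • v k) = (∑ i, β i * x i k) • v k := by
  simp only [Finset.sum_smul, mul_smul]

theorem HasSum.sum_mul_smul {s : ι → E} (h : ∀ i, HasSum (fun k => x i k • v k) (s i)) :
    HasSum (fun k => (∑ i, β i * x i k) • v k) (∑ i, β i • s i) := by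
  simpa only [sum_smul_smul_eq_sum_mul_smul] using
    hasSum_sum (s := Finset.univ) fun i _ => (h i).const_smul (β i)

theorem summable_norm_sum_mul_smul (h : ∀ i, Summable fun k => ‖x i k • v k‖) :
    Summable fun k => ‖(∑ i, β i * x i k) • v k‖ := by
  refine (summable_sum (s := Finset.univ) fun i _ => (h i).mul_left ‖β i‖).of_nonneg_of_le
    (fun _ => norm_nonneg _) fun k => ?_
  rw [← sum_smul_smul_eq_sum_mul_smul]
  exact (norm_sum_le _ _).trans_eq (by simp only [norm_smul])

end LinearCombination

theorem beta_combination_cancels_low_powers_general (n m : ℕ) (hm : 0 < m)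
    (A D : Matrix (Fin n) (Fin n) ℝ) (hA : IsUnit A) (b : EuclideanSpace ℝ (Fin n))
    (ε : ℝ) (hε : (m : ℝ) * |ε| * ‖A⁻¹ * D‖ < 1) (β : Fin m → ℝ)
    (hβ : (Matrix.of fun α j : Fin m => (((α : ℕ) + 1 : ℝ)) ^ (2 * (j : ℕ)))ᵀ.mulVec β
        = fun i : Fin m => if (i : ℕ) = 0 then (1 : ℝ) else 0) :
    Summable (fun k : ℕ =>
        ‖(∑ α : Fin m, β α * (((α : ℕ) + 1 : ℝ)) ^ (2 * (m + k))) •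
            mulVecE ((ε • (A⁻¹ * D)) ^ (2 * (m + k)) * A⁻¹) b‖) ∧
      ∑ α : Fin m, β α • xhat A D b ε ((α : ℕ) + 1)
        = mulVecE A⁻¹ b
            + ∑' k : ℕ, (∑ α : Fin m, β α * (((α : ℕ) + 1 : ℝ)) ^ (2 * (m + k))) •
                mulVecE ((ε • (A⁻¹ * D)) ^ (2 * (m + k)) * A⁻¹) b := by
  set F : ℕ → EuclideanSpace ℝ (Fin n) := fun j =>
    (∑ α : Fin m, β α * (((α : ℕ) + 1 : ℝ)) ^ (2 * j)) •
      mulVecE ((ε • (A⁻¹ * D)) ^ (2 * j) * A⁻¹) b with hF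
  have hsmall (α : Fin m) : ‖(((α : ℕ) + 1 : ℝ) * ε) • (A⁻¹ * D)‖ < 1 := by
    have hαm : ((α : ℕ) + 1 : ℝ) ≤ m := by exact_mod_cast α.2
    rw [norm_smul, Real.norm_eq_abs, abs_mul, abs_of_nonneg (by positivity)]
    exact hε.trans_le' (by gcongr)
  have hmoments (j : Fin m) :
      ∑ α : Fin m, β α * (((α : ℕ) + 1 : ℝ)) ^ (2 * (j : ℕ)) = if (j : ℕ) = 0 then 1 else 0 := by
    simpa [Matrix.mulVec, dotProduct, mul_comm] using congrFun hβ j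
  have hsum : HasSum F (∑ α : Fin m, β α • xhat A D b ε ((α : ℕ) + 1)) :=
    HasSum.sum_mul_smul β fun α => hasSum_xhat b hA (hsmall α)
  have hnorm : Summable fun k => ‖F k‖ :=
    summable_norm_sum_mul_smul β fun α => summable_norm_xhat_terms b (hsmall α)
  have hlow : ∑ i ∈ Finset.range m, F i = mulVecE A⁻¹ b := by
    rw [Finset.sum_eq_single_of_mem 0 (Finset.mem_range.mpr hm)]
    · have hβ_sum : ∑ α, β α = 1 := by simpa using hmoments ⟨0, hm⟩
      simp [hF, hβ_sum]
    · intro i hi hi0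
      simp [hF, hmoments ⟨i, Finset.mem_range.mp hi⟩, hi0]
  refine ⟨?_, ?_⟩
  · simpa only [add_comm m] using (summable_nat_add_iff m).mpr hnorm
  · rw [← hsum.tsum_eq, ← hsum.summable.sum_add_tsum_nat_add m, hlow]
    simp only [hF, add_comm _ m]

/-- If `β` solves `Γ_mᵀ β = e₁`, then the `β`-weighted combination of the averaged
perturbation solutions cancels all powers of `ε` below `2m`:
`∑_α β_α x̂_α = A⁻¹ b + ∑_{k ≥ m} (∑_α β_α α^(2k)) • ((ε • (A⁻¹ D))^(2k) A⁻¹) b`,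
where the series converges absolutely. -/
theorem beta_combination_cancels_low_powers (n m : ℕ) (hn : 0 < n) (hm : 0 < m)
    (A D : Matrix (Fin n) (Fin n) ℝ) (hA : IsUnit A) (b : EuclideanSpace ℝ (Fin n))
    (ε : ℝ) (hε : (m : ℝ) * |ε| * ‖A⁻¹ * D‖ < 1) (β : Fin m → ℝ)
    (hβ : (Matrix.of fun α j : Fin m => (((α : ℕ) + 1 : ℝ)) ^ (2 * (j : ℕ)))ᵀ.mulVec β
        = fun i : Fin m => if (i : ℕ) = 0 then (1 : ℝ) else 0) :
    Summable (fun k : ℕ =>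
        ‖(∑ α : Fin m, β α * (((α : ℕ) + 1 : ℝ)) ^ (2 * (m + k))) •
            mulVecE ((ε • (A⁻¹ * D)) ^ (2 * (m + k)) * A⁻¹) b‖) ∧
      ∑ α : Fin m, β α • xhat A D b ε ((α : ℕ) + 1)
        = mulVecE A⁻¹ b
            + ∑' k : ℕ, (∑ α : Fin m, β α * (((α : ℕ) + 1 : ℝ)) ^ (2 * (m + k))) •
                mulVecE ((ε • (A⁻¹ * D)) ^ (2 * (m + k)) * A⁻¹) b :=
  beta_combination_cancels_low_powers_general n m hm A D hA b ε hε β hβ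
end

section
/- Let n be a positive integer, let A be an invertible n×n real matrix, let D be an n×n real matrix, let b ∈ ℝⁿ, and let ε be a real number with 2 · |ε| · ‖A⁻¹ * D‖ < 1, where ‖·‖ is the operator norm induced by the Euclidean vector norm. For α ∈ {1, 2} define x̂_α := (1/2)((A + (α·ε) • D)⁻¹ b + (A − (α·ε) • D)⁻¹ b). Then (x̂₂ − 4 x̂₁)/(−3) = A⁻¹ b + Σ_{k=2}^∞ ((4 − 4^k)/3) • ((ε • (A⁻¹ * D))^{2k} * A⁻¹) b; in particular the ε² term is cancelled and the coefficients of the ε⁴ and ε⁶ terms are −4 and −20, respectively. -/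
/-!
Since `A ± c D = A (1 ± c A⁻¹D)`, with `s = c A⁻¹D` of norm `< 1` the average
`½((A + cD)⁻¹ + (A - cD)⁻¹)` equals `½((1 + s)⁻¹ + (1 - s)⁻¹) A⁻¹ = (1 - s²)⁻¹ A⁻¹`, the even part
`∑ s^(2k) A⁻¹` of the Neumann series. Doubling `c` multiplies the `k`-th term by `4^k`, so
`(x̂₂ - 4 x̂₁)/(-3)` has coefficients `(4 - 4^k)/3`: `1` for `k = 0` and `0` for `k = 1`.
-/

open scoped Matrix.Norms.L2Operator

open scoped Ring

section NormedRing

variable {R : Type*} [NormedRing R] [HasSummableGeomSeries R] {x : R}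

theorem hasSum_pow_two_mul_s8 (h : ‖x‖ < 1) :
    HasSum (fun k : ℕ => x ^ (2 * k)) (1 - x ^ 2)⁻¹ʳ := by
  simpa only [pow_mul] using hasSum_geom_series_inverse _
    ((norm_pow_le' x two_pos).trans_lt (pow_lt_one₀ (norm_nonneg x) h two_ne_zero))

theorem Ring.inverse_one_add_add_inverse_one_sub (h : ‖x‖ < 1) :
    (1 + x)⁻¹ʳ + (1 - x)⁻¹ʳ = 2 * (1 - x ^ 2)⁻¹ʳ := by
  have hu : IsUnit (1 - x) := isUnit_one_sub_of_norm_lt_one h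
  have hv : IsUnit (1 + x) := by
    simpa only [sub_neg_eq_add] using isUnit_one_sub_of_norm_lt_one (x := -x) (by rwa [norm_neg])
  have hfactor : 1 - x ^ 2 = (1 + x) * (1 - x) := by noncomm_ring
  have hcomm : Commute (1 + x) (1 - x) := by
    show (1 + x) * (1 - x) = (1 - x) * (1 + x)
    noncomm_ring
  rw [hfactor, Ring.mul_inverse_rev' hcomm]
  calc (1 + x)⁻¹ʳ + (1 - x)⁻¹ʳ = (1 - x)⁻¹ʳ * ((1 - x) + (1 + x)) * (1 + x)⁻¹ʳ := by
        rw [mul_add, add_mul, Ring.inverse_mul_cancel _ hu, one_mul, mul_assoc,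
          Ring.mul_inverse_cancel _ hv, mul_one, add_comm]
    _ = 2 * ((1 - x)⁻¹ʳ * (1 + x)⁻¹ʳ) := by
        rw [sub_add_add_cancel, one_add_one_eq_two, (Commute.ofNat_right _ 2).eq, mul_assoc]

end NormedRing

section NormedAlgebra

variable {R : Type*} [NormedRing R] [NormedAlgebra ℝ R] [HasSummableGeomSeries R]

noncomputable def averagedInverse (x : R) : R :=
  (1 / 2 : ℝ) • ((1 + x)⁻¹ʳ + (1 - x)⁻¹ʳ)

theorem hasSum_pow_two_mul_averagedInverse {x : R} (h : ‖x‖ < 1) :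
    HasSum (fun k : ℕ => x ^ (2 * k)) (averagedInverse x) := by
  rw [averagedInverse, Ring.inverse_one_add_add_inverse_one_sub h, two_mul,
    ← two_smul ℝ, smul_smul, one_div, inv_mul_cancel₀ two_ne_zero, one_smul]
  exact hasSum_pow_two_mul_s8 h

theorem hasSum_richardson_averagedInverse {x : R} (h : 2 * ‖x‖ < 1) :
    HasSum (fun k : ℕ => (((4 : ℝ) - 4 ^ (k + 2)) / 3) • x ^ (2 * (k + 2)))
      ((-3 : ℝ)⁻¹ • (averagedInverse ((2 : ℝ) • x) - (4 : ℝ) • averagedInverse x) - 1) := by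
  have h2x : ‖(2 : ℝ) • x‖ < 1 := by rwa [norm_smul, Real.norm_two]
  have hx : ‖x‖ < 1 := by linarith [norm_nonneg x]
  have hcomb := ((hasSum_pow_two_mul_averagedInverse h2x).sub
    ((hasSum_pow_two_mul_averagedInverse hx).const_smul (4 : ℝ))).const_smul (-3 : ℝ)⁻¹
  have hterm : ∀ k : ℕ, (-3 : ℝ)⁻¹ • (((2 : ℝ) • x) ^ (2 * k) - (4 : ℝ) • x ^ (2 * k))
      = (((4 : ℝ) - 4 ^ k) / 3) • x ^ (2 * k) := by
    intro k
    rw [smul_pow, pow_mul, ← sub_smul, smul_smul]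
    congr 1
    ring
  rw [funext hterm] at hcomb
  have hhead : ∑ k ∈ Finset.range 2, (((4 : ℝ) - 4 ^ k) / 3) • x ^ (2 * k) = 1 := by
    norm_num [Finset.sum_range_succ]
  rw [← hhead]
  exact (hasSum_nat_add_iff' 2).mpr hcomb

end NormedAlgebra

section Matrix

variable {n : ℕ}

noncomputable def mulVecEMulRight (C : Matrix (Fin n) (Fin n) ℝ) (b : EuclideanSpace ℝ (Fin n)) :
    Matrix (Fin n) (Fin n) ℝ →L[ℝ] EuclideanSpace ℝ (Fin n) :=
  LinearMap.toContinuousLinearMap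
    { toFun := fun M => mulVecE (M * C) b
      map_add' := fun M N => by simp [mulVecE, add_mul, Matrix.add_mulVec, WithLp.toLp_add]
      map_smul' := fun c M => by simp [mulVecE, Matrix.smul_mulVec, WithLp.toLp_smul] }

@[simp]
theorem mulVecEMulRight_apply (C M : Matrix (Fin n) (Fin n) ℝ) (b : EuclideanSpace ℝ (Fin n)) :
    mulVecEMulRight C b M = mulVecE (M * C) b :=
  rfl

theorem Matrix.add_smul_eq_mul_one_add_smul {m K : Type*} [Fintype m] [DecidableEq m]
    [CommRing K] {A : Matrix m m K} (hA : IsUnit A) (D : Matrix m m K) (c : K) :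
    A + c • D = A * (1 + c • (A⁻¹ * D)) := by
  rw [mul_add, mul_one, Matrix.mul_smul, ← Matrix.mul_assoc,
    Matrix.mul_nonsing_inv A ((Matrix.isUnit_iff_isUnit_det A).mp hA), Matrix.one_mul]

theorem xhat_eq_mulVecEMulRight_averagedInverse {A : Matrix (Fin n) (Fin n) ℝ} (hA : IsUnit A)
    (D : Matrix (Fin n) (Fin n) ℝ) (b : EuclideanSpace ℝ (Fin n)) (ε α : ℝ) :
    xhat A D b ε α = mulVecEMulRight A⁻¹ b (averagedInverse ((α * ε) • (A⁻¹ * D))) := by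
  have hinv : ∀ c : ℝ, (A + c • D)⁻¹ = (1 + c • (A⁻¹ * D))⁻¹ʳ * A⁻¹ := fun c => by
    rw [Matrix.add_smul_eq_mul_one_add_smul hA, Matrix.mul_inv_rev,
      Matrix.nonsing_inv_eq_ringInverse (1 + c • (A⁻¹ * D))]
  have hsub : A - (α * ε) • D = A + (-(α * ε)) • D := by rw [neg_smul, sub_eq_add_neg]
  rw [xhat, averagedInverse, hsub, hinv, hinv, neg_smul, ← sub_eq_add_neg, map_smul, map_add]
  rfl

end Matrix

theorem m_two_combination_series_general (n : ℕ)
    (A D : Matrix (Fin n) (Fin n) ℝ) (hA : IsUnit A) (b : EuclideanSpace ℝ (Fin n))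
    (ε : ℝ) (hε : 2 * |ε| * ‖A⁻¹ * D‖ < 1) :
    ((-3 : ℝ)⁻¹) • (xhat A D b ε 2 - (4 : ℝ) • xhat A D b ε 1)
        = mulVecE A⁻¹ b
            + ∑' k : ℕ, (((4 : ℝ) - 4 ^ (k + 2)) / 3) •
                mulVecE ((ε • (A⁻¹ * D)) ^ (2 * (k + 2)) * A⁻¹) b ∧
      (((4 : ℝ) - 4 ^ (2 : ℕ)) / 3) = -4 ∧ (((4 : ℝ) - 4 ^ (3 : ℕ)) / 3) = -20 := by
  refine ⟨?_, by norm_num, by norm_num⟩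
  have hx : 2 * ‖ε • (A⁻¹ * D)‖ < 1 := by rwa [norm_smul, Real.norm_eq_abs, ← mul_assoc]
  have hseries := ((hasSum_richardson_averagedInverse hx).mapL (mulVecEMulRight A⁻¹ b)).tsum_eq
  simp only [map_smul, map_sub, mulVecEMulRight_apply, Matrix.one_mul] at hseries
  rw [xhat_eq_mulVecEMulRight_averagedInverse hA, xhat_eq_mulVecEMulRight_averagedInverse hA,
    one_mul, mul_smul, hseries]
  simp only [mulVecEMulRight_apply, add_sub_cancel]

/-- Example 1 (`m = 2`) series form: `(x̂₂ - 4 x̂₁)/(-3)` equals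
`A⁻¹ b + ∑_{k ≥ 2} ((4 - 4^k)/3) • ((ε • (A⁻¹ D))^(2k) A⁻¹) b`; in particular the `ε²`
term is cancelled and the coefficients of the `ε⁴` and `ε⁶` terms are `-4` and `-20`. -/
theorem m_two_combination_series (n : ℕ) (hn : 0 < n)
    (A D : Matrix (Fin n) (Fin n) ℝ) (hA : IsUnit A) (b : EuclideanSpace ℝ (Fin n))
    (ε : ℝ) (hε : 2 * |ε| * ‖A⁻¹ * D‖ < 1) :
    ((-3 : ℝ)⁻¹) • (xhat A D b ε 2 - (4 : ℝ) • xhat A D b ε 1)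
        = mulVecE A⁻¹ b
            + ∑' k : ℕ, (((4 : ℝ) - 4 ^ (k + 2)) / 3) •
                mulVecE ((ε • (A⁻¹ * D)) ^ (2 * (k + 2)) * A⁻¹) b ∧
      (((4 : ℝ) - 4 ^ (2 : ℕ)) / 3) = -4 ∧ (((4 : ℝ) - 4 ^ (3 : ℕ)) / 3) = -20 :=
  m_two_combination_series_general n A D hA b ε hε
end
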